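/- Let A be the Cartan matrix of a complex semisimple Lie algebra of rank r, let I = (i_1,…,i_n) be a word with entries in {1,…,r}, and let λ = (λ_1,…,λ_r) be a dominant weight; set c_{jk} = A_{i_j i_k} and ℓ_j = λ_{i_j}, and let m_σ be the associated integer vectors. Suppose J = (i_{j_0}, i_{j_1}, …, i_{j_s}) is a subword of I (j_0 < j_1 < ⋯ < j_s) which is a minimal hesitant λ-walk with s ≥ 2, and define σ ∈ {+,−}^n by σ_p = − if p ∈ {j_0, j_1, …, j_s} and σ_p = + otherwise. Then: m_{σ,p} = 0 for all p ∉ {j_0,…,j_s}; m_{σ,j_s} = ℓ_{j_s} > 0; m_{σ,j_t} = −c_{j_t j_{t+1}} m_{σ,j_{t+1}} for 1 ≤ t ≤ s−1; and m_{σ,j_0} = −(2 m_{σ,j_1} + c_{j_0 j_2} m_{σ,j_2}). -/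

import Mathlib

open Finset

/-- `A_j(x) = ℓ_j − Σ_{k>j} c_{jk} x_k` (for the last index the sum is empty). -/
noncomputable def GKA {n : ℕ} (c : Fin n → Fin n → ℤ) (ℓ : Fin n → ℤ)
    (j : Fin n) (x : Fin n → ℝ) : ℝ :=
  (ℓ j : ℝ) - ∑ k ∈ Finset.univ.filter (fun k : Fin n => j < k), (c j k : ℝ) * x k

/-- The Grossberg–Karshon twisted cube `C(c,ℓ)`. -/
noncomputable def GKcube {n : ℕ} (c : Fin n → Fin n → ℤ) (ℓ : Fin n → ℤ) :
    Set (Fin n → ℝ) :=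
  {x | ∀ j : Fin n, (GKA c ℓ j x < x j ∧ x j < 0) ∨ (0 ≤ x j ∧ x j ≤ GKA c ℓ j x)}

/-- `sgn(t) = 1` for `t < 0` and `−1` for `t ≥ 0`. -/
noncomputable def GKsgn (t : ℝ) : ℝ := if t < 0 then 1 else -1

open Classical in
/-- The density function `ρ`: `ρ(x) = (−1)^n ∏_k sgn(x_k)` on `C(c,ℓ)`, `0` elsewhere. -/
noncomputable def GKrho {n : ℕ} (c : Fin n → Fin n → ℤ) (ℓ : Fin n → ℤ)
    (x : Fin n → ℝ) : ℝ :=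
  if x ∈ GKcube c ℓ then (-1 : ℝ) ^ n * ∏ k : Fin n, GKsgn (x k) else 0

/-- `(C(c,ℓ), ρ)` is untwisted: `C(c,ℓ)` is closed, convex, the convex hull of a
finite set, and `ρ ≡ 1` on `C(c,ℓ)`.  "Twisted" is the negation of this. -/
noncomputable def GKUntwisted {n : ℕ} (c : Fin n → Fin n → ℤ) (ℓ : Fin n → ℤ) : Prop :=
  IsClosed (GKcube c ℓ) ∧ Convex ℝ (GKcube c ℓ) ∧
  (∃ S : Finset (Fin n → ℝ), GKcube c ℓ = convexHull ℝ (S : Set (Fin n → ℝ))) ∧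
  (∀ x ∈ GKcube c ℓ, GKrho c ℓ x = 1)

/-- The Cartier data `m_σ`, defined by downward recursion:
`m_{σ,k} = 0` if `σ_k = +` (encoded `false`), and
`m_{σ,k} = ℓ_k − Σ_{s>k} c_{ks} m_{σ,s}` if `σ_k = −` (encoded `true`). -/
def GKm {n : ℕ} (c : Fin n → Fin n → ℤ) (ℓ : Fin n → ℤ) (σ : Fin n → Bool)
    (k : Fin n) : ℤ :=
  if σ k then
    ℓ k - ∑ s ∈ (Finset.univ.filter fun s : Fin n => k < s).attach,
      c k s.1 * GKm c ℓ σ s.1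
  else 0
termination_by n - k.val
decreasing_by
  have h := s.2
  simp only [Finset.mem_filter, Finset.mem_univ, true_and, Fin.lt_def] at h
  omega

/-- `A` is the Cartan matrix of a complex semisimple Lie algebra of rank `r`,
i.e. a generalized Cartan matrix of finite type: diagonal entries `2`,
nonpositive off-diagonal entries, `A_{ab} = 0 ↔ A_{ba} = 0`, and `A` is
symmetrizable by positive rationals `d_a` with `(d_a A_{ab})` symmetric
positive definite. -/
def IsCartanMatrix {r : ℕ} (A : Matrix (Fin r) (Fin r) ℤ) : Prop :=
  (∀ a, A a a = 2) ∧
  (∀ a b, a ≠ b → A a b ≤ 0) ∧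
  (∀ a b, A a b = 0 ↔ A b a = 0) ∧
  (∃ d : Fin r → ℚ, (∀ a, 0 < d a) ∧
    (∀ a b, d a * (A a b : ℚ) = d b * (A b a : ℚ)) ∧
    (∀ x : Fin r → ℚ, x ≠ 0 → 0 < ∑ a, ∑ b, x a * d a * (A a b : ℚ) * x b))

/-- `(w_0, …, w_s)` is a diagram walk followed by the condition that the final
root appears in `λ`: a `λ`-walk.  (Successive entries are distinct and adjacent
in the Dynkin diagram, and `λ_{w_s} > 0`.) -/
def IsLambdaWalkSeq {r : ℕ} (A : Matrix (Fin r) (Fin r) ℤ) (lam : Fin r → ℤ)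
    {s : ℕ} (w : Fin (s + 1) → Fin r) : Prop :=
  (∀ t : Fin s, w t.castSucc ≠ w t.succ ∧ A (w t.castSucc) (w t.succ) < 0) ∧
  0 < lam (w (Fin.last s))

/-- `(w_0, w_1, …, w_s)` is a hesitant `λ`-walk: `s ≥ 1`, `w_0 = w_1`, the
walking component `(w_1, …, w_s)` is a diagram walk, and `λ_{w_s} > 0`. -/
def IsHesitantLambdaWalkSeq {r : ℕ} (A : Matrix (Fin r) (Fin r) ℤ)
    (lam : Fin r → ℤ) {s : ℕ} (w : Fin (s + 1) → Fin r) : Prop :=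
  1 ≤ s ∧ w 0 = w 1 ∧
  (∀ t : Fin s, 1 ≤ t.val →
    (w t.castSucc ≠ w t.succ ∧ A (w t.castSucc) (w t.succ) < 0)) ∧
  0 < lam (w (Fin.last s))

/-- The word `i = (i_1, …, i_n)` is hesitant-`λ`-walk-avoiding: no subword
(subsequence, given by a strictly increasing reindexing `j`) is a hesitant
`λ`-walk. -/
def HesitantLambdaWalkAvoiding {r n : ℕ} (A : Matrix (Fin r) (Fin r) ℤ)
    (lam : Fin r → ℤ) (i : Fin n → Fin r) : Prop :=
  ¬ ∃ (s : ℕ) (j : Fin (s + 1) → Fin n), StrictMono j ∧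
      IsHesitantLambdaWalkSeq A lam (i ∘ j)

/-- Minimality of a hesitant `λ`-walk `(w_0, …, w_s)`: the entries of the
walking component `w_1, …, w_s` are pairwise distinct, and if `s ≥ 2` then
`λ_{w_t} = 0` for `0 ≤ t ≤ s − 1`. -/
def MinimalHLW {r s : ℕ} (lam : Fin r → ℤ) (w : Fin (s + 1) → Fin r) : Prop :=
  (∀ p q : Fin (s + 1), 1 ≤ p.val → 1 ≤ q.val → w p = w q → p = q) ∧
  (2 ≤ s → ∀ t : Fin (s + 1), t.val ≤ s - 1 → lam (w t) = 0)

/-!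
Along the support `j` of `σ`, the recursion for `m_σ` reads
`m_{j_t} = ℓ_{j_t} - ∑_{u > t} c_{j_t j_u} m_{j_u}`, and `m_σ` vanishes off `j`.
Minimality makes `ℓ_{j_t} = 0` for `t < s`. A finite-type Dynkin diagram has no cycles (the
positive definite form `d_a A_{ab}` would be `≤ 0` on the indicator vector of a cycle, each row
sum over the cycle being at most `2 - 1 - 1`), so the walk `i_{j_1}, …, i_{j_s}` through distinct
vertices has no chords and only the term `u = t + 1` survives. At `t = 0` we have
`i_{j_0} = i_{j_1}`, hence `c_{j_0 j_1} = 2`, and only `u = 1, 2` survive.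
-/

namespace IsCartanMatrix

variable {r : ℕ} {A : Matrix (Fin r) (Fin r) ℤ}

theorem apply_lt_zero_symm (hA : IsCartanMatrix A) {a b : Fin r} (h : A a b < 0) : A b a < 0 := by
  obtain ⟨hdiag, hoff, hzero, -⟩ := hA
  have hab : a ≠ b := by rintro rfl; linarith [hdiag a]
  have hba : A b a ≠ 0 := fun h0 => h.ne ((hzero a b).2 h0)
  exact lt_of_le_of_ne (hoff b a hab.symm) hba

theorem sum_apply_nonpos_of_two_neighbours (hA : IsCartanMatrix A) {S : Finset (Fin r)}
    {a b c : Fin r} (ha : a ∈ S) (hb : b ∈ S) (hc : c ∈ S) (hbc : b ≠ c)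
    (hab : A a b < 0) (hac : A a c < 0) : ∑ x ∈ S, A a x ≤ 0 := by
  obtain ⟨hdiag, hoff, -⟩ := hA
  have hne : ∀ {x}, A a x < 0 → a ≠ x := by rintro x hx rfl; linarith [hdiag a]
  have hsub : {a, b, c} ⊆ S := by simp [insert_subset_iff, ha, hb, hc]
  rw [← sum_sdiff hsub, sum_insert (by simp [hne hab, hne hac]),
    sum_pair hbc, hdiag]
  have hrest : ∑ x ∈ S \ {a, b, c}, A a x ≤ 0 :=
    sum_nonpos fun x hx => hoff a x fun h => by simp [h] at hx
  omega

theorem not_forall_two_neighbours (hA : IsCartanMatrix A) {S : Finset (Fin r)}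
    (hS : S.Nonempty) :
    ¬ ∀ a ∈ S, ∃ b ∈ S, ∃ c ∈ S, b ≠ c ∧ A a b < 0 ∧ A a c < 0 := by
  intro h
  obtain ⟨d, hd, -, hpos⟩ := hA.2.2.2
  set x : Fin r → ℚ := fun a => if a ∈ S then 1 else 0
  have hx : x ≠ 0 := by
    obtain ⟨a, ha⟩ := hS
    exact fun h0 => by simpa [x, ha] using congrFun h0 a
  have hform : ∑ a, ∑ b, x a * d a * (A a b : ℚ) * x b = ∑ a ∈ S, d a * ∑ b ∈ S, (A a b : ℚ) := by
    simp [x, mul_sum, ite_mul, mul_ite, sum_ite_mem]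
  have hrow : ∀ a ∈ S, d a * ∑ b ∈ S, (A a b : ℚ) ≤ 0 := by
    intro a ha
    obtain ⟨b, hb, c, hc, hbc, hab, hac⟩ := h a ha
    have := hA.sum_apply_nonpos_of_two_neighbours ha hb hc hbc hab hac
    exact mul_nonpos_of_nonneg_of_nonpos (hd a).le (by exact_mod_cast this)
  linarith [hpos x hx, sum_nonpos hrow]

theorem apply_eq_zero_of_walk (hA : IsCartanMatrix A) {s k : ℕ} {w : Fin (s + 1) → Fin r}
    (hadj : ∀ t : Fin s, k ≤ t.val → A (w t.castSucc) (w t.succ) < 0)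
    (hinj : ∀ p q : Fin (s + 1), k ≤ p.val → k ≤ q.val → w p = w q → p = q)
    {p q : Fin (s + 1)} (hp : k ≤ p.val) (hpq : p.val + 2 ≤ q.val) : A (w p) (w q) = 0 := by
  by_contra hne
  have hwne : ∀ a b (ha : a < s + 1) (hb : b < s + 1), k ≤ a → k ≤ b → a ≠ b →
      w ⟨a, ha⟩ ≠ w ⟨b, hb⟩ :=
    fun a b ha hb hka hkb hab h => hab (congrArg Fin.val (hinj _ _ hka hkb h))
  have hchord : A (w p) (w q) < 0 :=
    lt_of_le_of_ne (hA.2.1 _ _ (hwne p q p.2 q.2 hp (by omega) (by omega))) hne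
  have hstep : ∀ a b (ha : a < s + 1) (hb : b < s + 1), k ≤ a → b = a + 1 →
      A (w ⟨a, ha⟩) (w ⟨b, hb⟩) < 0 ∧ A (w ⟨b, hb⟩) (w ⟨a, ha⟩) < 0 := by
    rintro a b ha hb hka rfl
    have h := hadj ⟨a, by omega⟩ hka
    exact ⟨h, hA.apply_lt_zero_symm h⟩
  set S : Finset (Fin r) := (Finset.univ.filter fun t => p ≤ t ∧ t ≤ q).image w
  have hmem : ∀ a (ha : a < s + 1), p.val ≤ a → a ≤ q.val → w ⟨a, ha⟩ ∈ S := fun a ha h1 h2 =>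
    Finset.mem_image_of_mem w (mem_filter.2 ⟨mem_univ _, h1, h2⟩)
  have hneighbours : ∀ a (ha : a < s + 1), p.val ≤ a → a ≤ q.val →
      ∃ b c, ∃ (hb : b < s + 1) (hc : c < s + 1), p.val ≤ b ∧ b ≤ q.val ∧ p.val ≤ c ∧
        c ≤ q.val ∧ b ≠ c ∧ A (w ⟨a, ha⟩) (w ⟨b, hb⟩) < 0 ∧ A (w ⟨a, ha⟩) (w ⟨c, hc⟩) < 0 := by
    intro a ha hpa haq
    rcases eq_or_lt_of_le hpa with rfl | hpa'
    · exact ⟨p.val + 1, q.val, by omega, q.2, by omega, by omega, by omega, le_rfl, by omega,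
        (hstep _ _ _ _ hp rfl).1, hchord⟩
    rcases eq_or_lt_of_le haq with rfl | haq'
    · exact ⟨q.val - 1, p.val, by omega, p.2, by omega, by omega, le_rfl, by omega, by omega,
        (hstep _ _ _ _ (by omega) (by omega)).2, hA.apply_lt_zero_symm hchord⟩
    exact ⟨a - 1, a + 1, by omega, by omega, by omega, by omega, by omega, by omega, by omega,
      (hstep _ _ _ _ (by omega) (by omega)).2, (hstep _ _ _ _ (by omega) rfl).1⟩
  refine hA.not_forall_two_neighbours ⟨w p, hmem p p.2 le_rfl (by omega)⟩ ?_
  simp only [S, forall_mem_image, mem_filter, mem_univ, true_and, Fin.le_def]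
  rintro ⟨a, ha⟩ ⟨hpa, haq⟩
  obtain ⟨b, c, hb, hc, hpb, hbq, hpc, hcq, hbc, hab, hac⟩ := hneighbours a ha hpa haq
  exact ⟨_, hmem b hb hpb hbq, _, hmem c hc hpc hcq, hwne b c hb hc (by omega) (by omega) hbc,
    hab, hac⟩

end IsCartanMatrix

section GKm

variable {n : ℕ} (c : Fin n → Fin n → ℤ) (ℓ : Fin n → ℤ) (σ : Fin n → Bool)

theorem GKm_of_false {k : Fin n} (hk : σ k = false) : GKm c ℓ σ k = 0 := by
  rw [GKm, hk, if_neg Bool.false_ne_true]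

theorem GKm_of_true {k : Fin n} (hk : σ k = true) :
    GKm c ℓ σ k = ℓ k - ∑ q ∈ univ.filter (k < ·), c k q * GKm c ℓ σ q := by
  rw [GKm, if_pos hk, sum_attach _ fun q => c k q * GKm c ℓ σ q]

variable {σ} {N : ℕ} {j : Fin N → Fin n}

theorem GKm_eq_zero_of_forall_ne (hσ : ∀ p, σ p = true ↔ ∃ t, j t = p) {p : Fin n}
    (hp : ∀ t, j t ≠ p) : GKm c ℓ σ p = 0 :=
  GKm_of_false c ℓ σ (Bool.eq_false_iff.2 fun h => absurd ((hσ p).1 h) (by simpa using hp))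

theorem GKm_apply_of_strictMono (hj : StrictMono j) (hσ : ∀ p, σ p = true ↔ ∃ t, j t = p)
    (t : Fin N) :
    GKm c ℓ σ (j t) = ℓ (j t) - ∑ u ∈ univ.filter (t < ·), c (j t) (j u) * GKm c ℓ σ (j u) := by
  rw [GKm_of_true c ℓ σ ((hσ (j t)).2 ⟨t, rfl⟩),
    ← sum_image (f := fun q => c (j t) q * GKm c ℓ σ q) fun x _ y _ h => hj.injective h]
  congr 1
  refine (sum_subset (fun q hq => ?_) fun q hq hq' => ?_).symm
  · obtain ⟨u, hu, rfl⟩ := mem_image.1 hq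
    simpa using hj (mem_filter.1 hu).2
  · rw [GKm_eq_zero_of_forall_ne c ℓ hσ fun u hu => hq' ?_, mul_zero]
    subst hu
    exact mem_image_of_mem j (by simpa [hj.lt_iff_lt] using hq)

theorem GKm_apply_of_strictMono_of_subset (hj : StrictMono j)
    (hσ : ∀ p, σ p = true ↔ ∃ t, j t = p) {t : Fin N} {T : Finset (Fin N)}
    (hT : ∀ u ∈ T, t < u) (hc : ∀ u, t < u → u ∉ T → c (j t) (j u) = 0) :
    GKm c ℓ σ (j t) = ℓ (j t) - ∑ u ∈ T, c (j t) (j u) * GKm c ℓ σ (j u) := by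
  rw [GKm_apply_of_strictMono c ℓ hj hσ t]
  congr 1
  refine (sum_subset (fun u hu => by simpa using hT u hu) fun u hu huT => ?_).symm
  rw [hc u (by simpa using hu) huT, zero_mul]

theorem GKm_apply_last {s : ℕ} {j : Fin (s + 1) → Fin n} (hj : StrictMono j)
    (hσ : ∀ p, σ p = true ↔ ∃ t, j t = p) : GKm c ℓ σ (j (Fin.last s)) = ℓ (j (Fin.last s)) := by
  rw [GKm_apply_of_strictMono_of_subset c ℓ hj hσ (T := ∅) (by simp)
    fun u hu => absurd hu (not_lt.2 u.le_last), sum_empty, sub_zero]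

end GKm

theorem IsHesitantLambdaWalkSeq.apply_eq_zero_of_add_two_le {r s : ℕ}
    {A : Matrix (Fin r) (Fin r) ℤ} {lam : Fin r → ℤ} {w : Fin (s + 1) → Fin r}
    (hA : IsCartanMatrix A) (hw : IsHesitantLambdaWalkSeq A lam w) (hmin : MinimalHLW lam w)
    {p q : Fin (s + 1)} (hp : 1 ≤ p.val) (hpq : p.val + 2 ≤ q.val) : A (w p) (w q) = 0 :=
  hA.apply_eq_zero_of_walk (fun t ht => (hw.2.2.1 t ht).2) hmin.1 hp hpq

/-- With `A` a Cartan matrix, `i` a word, `λ` dominant,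
`c_{jk} = A_{i_j i_k}`, `ℓ_j = λ_{i_j}`: if `(i_{j_0}, …, i_{j_s})` is a
subword of `i` which is a minimal hesitant `λ`-walk with `s ≥ 2`, and `σ` is
`−` exactly on `{j_0, …, j_s}`, then `m_{σ,p} = 0` for `p ∉ {j_0,…,j_s}`,
`m_{σ,j_s} = ℓ_{j_s} > 0`, `m_{σ,j_t} = −c_{j_t j_{t+1}} m_{σ,j_{t+1}}` for
`1 ≤ t ≤ s−1`, and `m_{σ,j_0} = −(2 m_{σ,j_1} + c_{j_0 j_2} m_{σ,j_2})`. -/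
theorem statement12 {r n : ℕ} (A : Matrix (Fin r) (Fin r) ℤ)
    (hA : IsCartanMatrix A) (lam : Fin r → ℤ)
    (i : Fin n → Fin r) (s : ℕ) (hs : 2 ≤ s)
    (j : Fin (s + 1) → Fin n) (hj : StrictMono j)
    (hw : IsHesitantLambdaWalkSeq A lam (i ∘ j))
    (hmin : MinimalHLW lam (i ∘ j))
    (σ : Fin n → Bool) (hσ : ∀ p, σ p = true ↔ ∃ t, j t = p) :
    (∀ p : Fin n, (∀ t, j t ≠ p) →
      GKm (fun p q => A (i p) (i q)) (fun p => lam (i p)) σ p = 0) ∧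
    (GKm (fun p q => A (i p) (i q)) (fun p => lam (i p)) σ (j (Fin.last s)) =
      lam (i (j (Fin.last s))) ∧
     0 < GKm (fun p q => A (i p) (i q)) (fun p => lam (i p)) σ (j (Fin.last s))) ∧
    (∀ t : Fin s, 1 ≤ t.val →
      GKm (fun p q => A (i p) (i q)) (fun p => lam (i p)) σ (j t.castSucc) =
        - A (i (j t.castSucc)) (i (j t.succ)) *
          GKm (fun p q => A (i p) (i q)) (fun p => lam (i p)) σ (j t.succ)) ∧
    GKm (fun p q => A (i p) (i q)) (fun p => lam (i p)) σ (j 0) =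
      -(2 * GKm (fun p q => A (i p) (i q)) (fun p => lam (i p)) σ (j ⟨1, by omega⟩) +
        A (i (j 0)) (i (j ⟨2, by omega⟩)) *
          GKm (fun p q => A (i p) (i q)) (fun p => lam (i p)) σ (j ⟨2, by omega⟩)) := by
  have hchord {p q : Fin (s + 1)} := hw.apply_eq_zero_of_add_two_le hA hmin (p := p) (q := q)
  have hzero : ∀ t : Fin (s + 1), t.val ≤ s - 1 → lam (i (j t)) = 0 := hmin.2 hs
  have hw01 : i (j 0) = i (j ⟨1, by omega⟩) :=
    hw.2.1.trans <| congrArg (i ∘ j) <|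
      Fin.ext ((Fin.val_one' _).trans (Nat.mod_eq_of_lt (by omega)))
  have hrec {t : Fin (s + 1)} {T : Finset (Fin (s + 1))} :=
    GKm_apply_of_strictMono_of_subset (fun p q => A (i p) (i q)) (fun p => lam (i p)) hj hσ
      (t := t) (T := T)
  refine ⟨fun p hp => GKm_eq_zero_of_forall_ne _ _ hσ hp, ?_, fun t ht => ?_, ?_⟩
  · have h := GKm_apply_last (fun p q => A (i p) (i q)) (fun p => lam (i p)) hj hσ
    exact ⟨h, h ▸ hw.2.2.2⟩
  · have hc (u) (htu : t.castSucc < u) (hu : u ∉ ({t.succ} : Finset _)) :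
        A (i (j t.castSucc)) (i (j u)) = 0 := by
      have hu' : u.val ≠ t.val + 1 := fun h => hu (mem_singleton.2 (Fin.ext h))
      exact hchord ht (by simp only [Fin.lt_def, Fin.val_castSucc] at htu ⊢; omega)
    rw [hrec (by simp) hc, sum_singleton, hzero _ (by rw [Fin.val_castSucc]; omega)]
    ring
  · have hT : ∀ u ∈ ({⟨1, by omega⟩, ⟨2, by omega⟩} : Finset (Fin (s + 1))), 0 < u := by
      simp only [mem_insert, mem_singleton]
      rintro u (rfl | rfl) <;> exact Fin.lt_def.2 (by simp)
    have hc (u) (h0u : 0 < u) (hu : u ∉ ({⟨1, by omega⟩, ⟨2, by omega⟩} : Finset (Fin (s + 1)))) :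
        A (i (j 0)) (i (j u)) = 0 := by
      simp only [mem_insert, mem_singleton, not_or, Fin.ext_iff] at hu
      rw [hw01]
      exact hchord le_rfl (show 1 + 2 ≤ u.val by have := Fin.val_pos_iff.2 h0u; omega)
    rw [hrec hT hc, sum_pair (by simp), hzero 0 (Nat.zero_le _), hw01, hA.1]
    ring
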